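/- arXiv:1309.5035 — 3 statements merged into one kernel-verified Lean document; each statement's English description precedes it below -/
import Mathlib

section
/- Let E, F, A be cochain complexes of modules over a ring, let q : E → A and r : F → A be chain maps, and let f : E → F be a homotopy equivalence such that r ∘ f is chain homotopic to q. Then the mapping cones mappingCone(q) and mappingCone(r) are homotopy equivalent cochain complexes. -/
/-!
The mapping-cone triangles `E ⟶ A ⟶ cone q` and `F ⟶ A ⟶ cone r` are distinguished in the
homotopy category, and the homotopy equivalence `f` together with the identity of `A` is an
isomorphism between their first two vertices commuting with `q` and `r` up to homotopy. In a
pretriangulated category such an isomorphism extends to an isomorphism of triangles, so the cones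
are isomorphic in the homotopy category, i.e. homotopy equivalent.
-/

open CategoryTheory CochainComplex

namespace HomotopyCategory

variable {C : Type*} [Category C] [Preadditive C] [Limits.HasZeroObject C]
  [Limits.HasBinaryBiproducts C]

noncomputable def mappingConeIsoOfIsoOfComm {K₁ K₂ L : CochainComplex C ℤ}
    (φ₁ : K₁ ⟶ L) (φ₂ : K₂ ⟶ L)
    (e : (quotient C (.up ℤ)).obj K₁ ≅ (quotient C (.up ℤ)).obj K₂)
    (comm : e.hom ≫ (quotient C (.up ℤ)).map φ₂ = (quotient C (.up ℤ)).map φ₁) :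
    (quotient C (.up ℤ)).obj (mappingCone φ₁) ≅ (quotient C (.up ℤ)).obj (mappingCone φ₂) :=
  Pretriangulated.Triangle.π₃.mapIso <|
    Pretriangulated.isoTriangleOfIso₁₂ _ _ (mappingCone_triangleh_distinguished φ₁)
      (mappingCone_triangleh_distinguished φ₂) e (Iso.refl _) ((Category.comp_id _).trans comm.symm)

end HomotopyCategory

namespace CochainComplex.mappingCone

variable {C : Type*} [Category C] [Preadditive C] [Limits.HasZeroObject C]
  [Limits.HasBinaryBiproducts C]

noncomputable def homotopyEquivOfHomotopyEquiv {K₁ K₂ L : CochainComplex C ℤ}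
    (φ₁ : K₁ ⟶ L) (φ₂ : K₂ ⟶ L) (e : HomotopyEquiv K₁ K₂) (H : Homotopy (e.hom ≫ φ₂) φ₁) :
    HomotopyEquiv (mappingCone φ₁) (mappingCone φ₂) :=
  HomotopyCategory.homotopyEquivOfIso <|
    HomotopyCategory.mappingConeIsoOfIsoOfComm φ₁ φ₂ (HomotopyCategory.isoOfHomotopyEquiv e) <| by
      simpa only [HomotopyCategory.isoOfHomotopyEquiv, ← Functor.map_comp]
        using HomotopyCategory.eq_of_homotopy _ _ H

end CochainComplex.mappingCone

/-- If `q : E ⟶ A`, `r : F ⟶ A` are chain maps and `f : E ⟶ F` is a homotopy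
equivalence with `r ∘ f` chain homotopic to `q`, then the mapping cones of `q`
and `r` are homotopy equivalent. -/
theorem stmt_6 {R : Type*} [Ring R]
    (E F A : CochainComplex (ModuleCat R) ℤ)
    (q : E ⟶ A) (r : F ⟶ A) (f : E ⟶ F) (g : F ⟶ E)
    (hgf : Homotopy (f ≫ g) (𝟙 E)) (hfg : Homotopy (g ≫ f) (𝟙 F))
    (hcomm : Homotopy (f ≫ r) q) :
    Nonempty (HomotopyEquiv (mappingCone q) (mappingCone r)) :=
  ⟨mappingCone.homotopyEquivOfHomotopyEquiv q r ⟨f, g, hgf, hfg⟩ hcomm⟩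
end

section
/- Let X and Y be cochain complexes of modules over a ring, f : X → Y and g : Y → X chain maps, h a chain homotopy from g∘f to 𝟙_X, and h' a chain homotopy from f∘g to 𝟙_Y. Then there exists a chain homotopy h̃ from g∘f to 𝟙_X such that the degree −1 maps f∘h̃ and h'∘f from X to Y differ by a boundary in the Hom-complex: there exists a degree −2 map j : X → Y with f∘h̃ − h'∘f = d_Y∘j + j∘d_X (up to the standard sign convention). -/
/-!
With `t := h ≫ f - f ≫ h'`, a cocycle of degree `-1`, replace `h` by `h̃ := h - t ≫ g`, which is
still a homotopy from `f ≫ g` to `𝟙 X`. Then `h̃ ≫ f - f ≫ h' = t - t ≫ (g ≫ f) = -t ≫ δ h'`,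
and since `t` is a cocycle this is the boundary of `-(t ≫ h')`.
-/

open CategoryTheory CochainComplex CochainComplex.HomComplex

section

variable {C : Type*} [Category C] [Preadditive C] {F G K : CochainComplex C ℤ}

def Homotopy.addCocycle {φ₁ φ₂ : F ⟶ G} (h : Homotopy φ₁ φ₂) (z : Cocycle F G (-1)) :
    Homotopy φ₁ φ₂ :=
  (Cochain.equivHomotopy φ₁ φ₂).symm
    ⟨Cochain.ofHomotopy h + z, by rw [δ_add, Cocycle.δ_eq_zero, add_zero, δ_ofHomotopy]; abel⟩

namespace CochainComplex.HomComplex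

lemma Cochain.ofHomotopy_addCocycle {φ₁ φ₂ : F ⟶ G} (h : Homotopy φ₁ φ₂)
    (z : Cocycle F G (-1)) :
    Cochain.ofHomotopy (h.addCocycle z) = Cochain.ofHomotopy h + z := by
  rw [Homotopy.addCocycle, ← Cochain.equivHomotopy_apply_coe, Equiv.apply_symm_apply]

lemma δ_cocycle_comp {n₁ n₂ n₁₂ : ℤ} (z₁ : Cocycle F G n₁) (z₂ : Cochain G K n₂)
    (h : n₁ + n₂ = n₁₂) (m₂ m₁₂ : ℤ) (h₁₂ : n₁₂ + 1 = m₁₂) (h₂ : n₂ + 1 = m₂) :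
    δ n₁₂ m₁₂ ((z₁ : Cochain F G n₁).comp z₂ h) =
      (z₁ : Cochain F G n₁).comp (δ n₂ m₂ z₂) (by rw [← h₁₂, ← h₂, ← h, add_assoc]) := by
  rw [δ_comp _ _ h _ m₂ _ h₁₂ rfl h₂, Cocycle.δ_eq_zero, Cochain.zero_comp, smul_zero, add_zero]

/-- `h ≫ f' - f ≫ h'`, a cocycle because `f` and `f'` intertwine the ends of `h` and `h'`. -/
def Cocycle.ofHomotopies {F' G' : CochainComplex C ℤ} {φ₁ φ₂ : F ⟶ F'} {ψ₁ ψ₂ : G ⟶ G'}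
    (h : Homotopy φ₁ φ₂) (h' : Homotopy ψ₁ ψ₂) (f : F ⟶ G) (f' : F' ⟶ G')
    (w₁ : φ₁ ≫ f' = f ≫ ψ₁) (w₂ : φ₂ ≫ f' = f ≫ ψ₂) : Cocycle F G' (-1) :=
  Cocycle.mk ((Cochain.ofHomotopy h).comp (Cochain.ofHom f') (add_zero _) -
      (Cochain.ofHom f).comp (Cochain.ofHomotopy h') (zero_add _)) 0 (neg_add_cancel 1) (by
    simp only [δ_sub, δ_comp_ofHom, δ_ofHom_comp, δ_ofHomotopy, Cochain.sub_comp,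
      Cochain.comp_sub, ← Cochain.ofHom_comp, w₁, w₂, sub_self])

end CochainComplex.HomComplex

end

/-- The homotopies witnessing a homotopy equivalence `f : X ⟶ Y`, `g : Y ⟶ X` can
be corrected: there is a homotopy `h̃` from `g∘f` to `𝟙 X` such that the degree `-1`
maps `f ∘ h̃` and `h' ∘ f` differ by a boundary in the Hom-complex, i.e. by `δ j`
for some degree `-2` map `j`. -/
theorem stmt_7 {R : Type*} [Ring R]
    (X Y : CochainComplex (ModuleCat R) ℤ)
    (f : X ⟶ Y) (g : Y ⟶ X)
    (h : Homotopy (f ≫ g) (𝟙 X)) (h' : Homotopy (g ≫ f) (𝟙 Y)) :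
    ∃ (htilde : Homotopy (f ≫ g) (𝟙 X)) (j : Cochain X Y (-2)),
      δ (-2) (-1) j =
        (Cochain.ofHomotopy htilde).comp (Cochain.ofHom f) (by norm_num) -
          (Cochain.ofHom f).comp (Cochain.ofHomotopy h') (by norm_num) := by
  let t := Cocycle.ofHomotopies h h' f f (Category.assoc f g f) (by simp)
  refine ⟨h.addCocycle (-t.postcomp g), -(t : Cochain X Y (-1)).comp (Cochain.ofHomotopy h')
    (by norm_num), ?_⟩
  rw [δ_neg, δ_cocycle_comp t _ _ 0 (-1) (by norm_num) (neg_add_cancel 1), δ_ofHomotopy,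
    Cochain.ofHomotopy_addCocycle]
  simp only [Cocycle.coe_neg, Cocycle.postcomp_coe, Cochain.add_comp, Cochain.neg_comp,
    Cochain.comp_assoc_of_third_is_zero_cochain, ← Cochain.ofHom_comp, Cochain.comp_sub,
    Cochain.comp_id]
  simp only [t, Cocycle.ofHomotopies, Cocycle.mk_coe]
  abel
end

section
/- Let k be a field of characteristic 0 (or any commutative ring in which 2 is invertible), and let P, B₁, B₂, C be k-modules with k-linear maps ν_i : P → B_i, μ_i : B_i → P, η_i : B_i → C, κ_i : C → B_i (i = 1,2) satisfying: η_i ∘ κ_i = 𝟙_C, ν_i ∘ μ_i = 𝟙_{B_i}, ν₂ ∘ μ₁ = −κ₂ ∘ η₁, ν₁ ∘ μ₂ = −κ₁ ∘ η₂, and η₁ ∘ ν₁ = −η₂ ∘ ν₂. Then: (a) the map δ : B₁ ⊕ B₂ → C, (b₁,b₂) ↦ η₁(b₁) + η₂(b₂), is surjective; and (b) the sequence P →γ B₁ ⊕ B₂ →δ C with γ(p) = (ν₁(p), ν₂(p)) is exact at B₁ ⊕ B₂ (i.e. ker δ = im γ). -/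
section BraidingDiagram

variable {k P B₁ B₂ C : Type*}

theorem LinearMap.surjective_add_of_comp_eq_id [Semiring k]
    [AddCommMonoid B₁] [AddCommMonoid B₂] [AddCommMonoid C]
    [Module k B₁] [Module k B₂] [Module k C]
    {η₁ : B₁ →ₗ[k] C} (η₂ : B₂ →ₗ[k] C) {κ₁ : C →ₗ[k] B₁} (h : η₁ ∘ₗ κ₁ = LinearMap.id) :
    Function.Surjective (fun bc : B₁ × B₂ => η₁ bc.1 + η₂ bc.2) := fun c =>
  ⟨(κ₁ c, 0), by simpa using LinearMap.congr_fun h c⟩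

variable [Ring k] [AddCommGroup P] [AddCommGroup B₁] [AddCommGroup B₂] [AddCommGroup C]
  [Module k P] [Module k B₁] [Module k B₂] [Module k C]
  {ν₁ : P →ₗ[k] B₁} {ν₂ : P →ₗ[k] B₂} {μ₁ : B₁ →ₗ[k] P} {μ₂ : B₂ →ₗ[k] P}
  {η₁ : B₁ →ₗ[k] C} {η₂ : B₂ →ₗ[k] C} {κ₁ : C →ₗ[k] B₁} {κ₂ : C →ₗ[k] B₂}

theorem add_eq_zero_of_comp_eq_neg (h : η₁ ∘ₗ ν₁ = -(η₂ ∘ₗ ν₂)) (p : P) :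
    η₁ (ν₁ p) + η₂ (ν₂ p) = 0 := by
  simpa [add_eq_zero_iff_eq_neg] using LinearMap.congr_fun h p

/-- The preimage is `μ₁ (b₁ - κ₁ (η₁ b₁)) + μ₂ b₂`: correcting `b₁` into `ker η₁` kills the
cross term `ν₂ ∘ μ₁ = -κ₂ ∘ η₁`, while `ν₁ ∘ μ₂ = -κ₁ ∘ η₂` restores the correction since
`η₂ b₂ = -η₁ b₁`. -/
theorem exists_apply_eq_of_add_eq_zero (h1 : η₁ ∘ₗ κ₁ = LinearMap.id)
    (h3 : ν₁ ∘ₗ μ₁ = LinearMap.id) (h4 : ν₂ ∘ₗ μ₂ = LinearMap.id)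
    (h5 : ν₂ ∘ₗ μ₁ = -(κ₂ ∘ₗ η₁)) (h6 : ν₁ ∘ₗ μ₂ = -(κ₁ ∘ₗ η₂))
    {b₁ : B₁} {b₂ : B₂} (hb : η₁ b₁ + η₂ b₂ = 0) :
    ∃ p : P, ν₁ p = b₁ ∧ ν₂ p = b₂ := by
  have hηκ (c : C) : η₁ (κ₁ c) = c := LinearMap.congr_fun h1 c
  have hη₂ : η₂ b₂ = -η₁ b₁ := eq_neg_of_add_eq_zero_right hb
  set x := b₁ - κ₁ (η₁ b₁)
  have hx : η₁ x = 0 := by simp [x, hηκ]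
  refine ⟨μ₁ x + μ₂ b₂, ?_, ?_⟩
  · have h₁ : ν₁ (μ₁ x) = x := LinearMap.congr_fun h3 x
    have h₂ : ν₁ (μ₂ b₂) = -κ₁ (η₂ b₂) := LinearMap.congr_fun h6 b₂
    rw [map_add, h₁, h₂, hη₂, map_neg, neg_neg, sub_add_cancel]
  · have h₁ : ν₂ (μ₁ x) = -κ₂ (η₁ x) := LinearMap.congr_fun h5 x
    have h₂ : ν₂ (μ₂ b₂) = b₂ := LinearMap.congr_fun h4 b₂
    rw [map_add, h₁, h₂, hx, map_zero, neg_zero, zero_add]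

end BraidingDiagram

theorem stmt_9_general {k : Type*} [CommRing k]
    {P B₁ B₂ C : Type*}
    [AddCommGroup P] [AddCommGroup B₁] [AddCommGroup B₂] [AddCommGroup C]
    [Module k P] [Module k B₁] [Module k B₂] [Module k C]
    (ν₁ : P →ₗ[k] B₁) (ν₂ : P →ₗ[k] B₂) (μ₁ : B₁ →ₗ[k] P) (μ₂ : B₂ →ₗ[k] P)
    (η₁ : B₁ →ₗ[k] C) (η₂ : B₂ →ₗ[k] C) (κ₁ : C →ₗ[k] B₁) (κ₂ : C →ₗ[k] B₂)
    (h1 : η₁ ∘ₗ κ₁ = LinearMap.id)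
    (h3 : ν₁ ∘ₗ μ₁ = LinearMap.id) (h4 : ν₂ ∘ₗ μ₂ = LinearMap.id)
    (h5 : ν₂ ∘ₗ μ₁ = -(κ₂ ∘ₗ η₁)) (h6 : ν₁ ∘ₗ μ₂ = -(κ₁ ∘ₗ η₂))
    (h7 : η₁ ∘ₗ ν₁ = -(η₂ ∘ₗ ν₂)) :
    Function.Surjective (fun bc : B₁ × B₂ => η₁ bc.1 + η₂ bc.2) ∧
      (∀ bc : B₁ × B₂, η₁ bc.1 + η₂ bc.2 = 0 ↔ ∃ p : P, ν₁ p = bc.1 ∧ ν₂ p = bc.2) := by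
  refine ⟨LinearMap.surjective_add_of_comp_eq_id η₂ h1, fun ⟨b₁, b₂⟩ => ⟨?_, ?_⟩⟩
  · exact exists_apply_eq_of_add_eq_zero h1 h3 h4 h5 h6
  · rintro ⟨p, rfl, rfl⟩
    exact add_eq_zero_of_comp_eq_neg h7 p

/-- Abstract form of the braiding-criterion exactness lemma: given the diagram of
`k`-modules with `ηᵢ ∘ κᵢ = id`, `νᵢ ∘ μᵢ = id`, `ν₂ ∘ μ₁ = −κ₂ ∘ η₁`,
`ν₁ ∘ μ₂ = −κ₁ ∘ η₂` and `η₁ ∘ ν₁ = −η₂ ∘ ν₂`, the map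
`δ : B₁ ⊕ B₂ → C` is surjective and the sequence `P → B₁ ⊕ B₂ → C` is exact in the
middle. Here `2` is assumed invertible in `k`. -/
theorem stmt_9 {k : Type*} [CommRing k] [Invertible (2 : k)]
    {P B₁ B₂ C : Type*}
    [AddCommGroup P] [AddCommGroup B₁] [AddCommGroup B₂] [AddCommGroup C]
    [Module k P] [Module k B₁] [Module k B₂] [Module k C]
    (ν₁ : P →ₗ[k] B₁) (ν₂ : P →ₗ[k] B₂) (μ₁ : B₁ →ₗ[k] P) (μ₂ : B₂ →ₗ[k] P)
    (η₁ : B₁ →ₗ[k] C) (η₂ : B₂ →ₗ[k] C) (κ₁ : C →ₗ[k] B₁) (κ₂ : C →ₗ[k] B₂)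
    (h1 : η₁ ∘ₗ κ₁ = LinearMap.id) (h2 : η₂ ∘ₗ κ₂ = LinearMap.id)
    (h3 : ν₁ ∘ₗ μ₁ = LinearMap.id) (h4 : ν₂ ∘ₗ μ₂ = LinearMap.id)
    (h5 : ν₂ ∘ₗ μ₁ = -(κ₂ ∘ₗ η₁)) (h6 : ν₁ ∘ₗ μ₂ = -(κ₁ ∘ₗ η₂))
    (h7 : η₁ ∘ₗ ν₁ = -(η₂ ∘ₗ ν₂)) :
    Function.Surjective (fun bc : B₁ × B₂ => η₁ bc.1 + η₂ bc.2) ∧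
      (∀ bc : B₁ × B₂, η₁ bc.1 + η₂ bc.2 = 0 ↔ ∃ p : P, ν₁ p = bc.1 ∧ ν₂ p = bc.2) :=
  stmt_9_general ν₁ ν₂ μ₁ μ₂ η₁ η₂ κ₁ κ₂ h1 h3 h4 h5 h6 h7
end
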